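/- For a path connected finite T₀ space P, the following chain of inequalities holds: cat(P) ≤ TC(P) = CC(P) ≤ cat(P × P) ≤ (#Max(P))². -/

import Mathlib

open Set

/-- The finite fence poset `0 < 1 > 2 < ⋯ m` on `m+1` points. -/
def J (m : ℕ) : Type := Fin (m + 1)

namespace J

/-- The underlying natural number of a point of the fence. -/
def val {m : ℕ} (i : J m) : ℕ := @Fin.val (m + 1) i

instance (m : ℕ) : PartialOrder (J m) where
  le i j := i.val = j.val ∨ (j.val % 2 = 1 ∧ (j.val = i.val + 1 ∨ i.val = j.val + 1))
  le_refl i := Or.inl rfl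
  le_trans a b c h₁ h₂ := by
    show a.val = c.val ∨ (c.val % 2 = 1 ∧ (c.val = a.val + 1 ∨ a.val = c.val + 1))
    rcases h₁ with h₁ | h₁ <;> rcases h₂ with h₂ | h₂ <;> omega
  le_antisymm a b h₁ h₂ := by
    have : a.val = b.val := by rcases h₁ with h₁ | h₁ <;> rcases h₂ with h₂ | h₂ <;> omega
    exact @Fin.val_injective (m + 1) a b this

instance (m : ℕ) : Finite (J m) := inferInstanceAs (Finite (Fin (m + 1)))

/-- The initial point `0` of the fence. -/
def zero {m : ℕ} : J m := (0 : Fin (m + 1))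

/-- The terminal point `m` of the fence. -/
def last {m : ℕ} : J m := Fin.last m

end J

/-- The Alexandrov topology on a preordered set: open sets are the lower sets (ideals). -/
def alexTop (α : Type*) [Preorder α] : TopologicalSpace α where
  IsOpen s := IsLowerSet s
  isOpen_univ := isLowerSet_univ
  isOpen_inter _ _ := IsLowerSet.inter
  isOpen_sUnion _ := isLowerSet_sUnion

instance (m : ℕ) : TopologicalSpace (J m) := alexTop (J m)

/-- `P × P` can be covered by `n` open sets, each admitting a continuous section of
`q_m : P^{J_m} → P × P`, `γ ↦ (γ(0), γ(m))`. -/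
def hasCCCover (P : Type*) [TopologicalSpace P] (m n : ℕ) : Prop :=
  ∃ U : Fin n → Set (P × P), (∀ i, IsOpen (U i)) ∧ (⋃ i, U i) = Set.univ ∧
    ∀ i, ∃ s : C(U i, C(J m, P)),
      ∀ x : U i, (s x) J.zero = (x : P × P).1 ∧ (s x) J.last = (x : P × P).2

/-- The combinatorial complexity at length `m`. -/
noncomputable def CCm (P : Type*) [TopologicalSpace P] (m : ℕ) : ℕ∞ :=
  sInf ((↑) '' {n : ℕ | hasCCCover P m n})

/-- The combinatorial complexity `CC(P) = min_m CC_m(P)`. -/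
noncomputable def CC (P : Type*) [TopologicalSpace P] : ℕ∞ := ⨅ m, CCm P m

/-- `X × X` can be covered by `n` open sets, each admitting a continuous section of the
path fibration `X^I → X × X`. -/
def hasTCCover (X : Type*) [TopologicalSpace X] (n : ℕ) : Prop :=
  ∃ U : Fin n → Set (X × X), (∀ i, IsOpen (U i)) ∧ (⋃ i, U i) = Set.univ ∧
    ∀ i, ∃ s : C(U i, C(unitInterval, X)),
      ∀ x : U i, (s x) 0 = (x : X × X).1 ∧ (s x) 1 = (x : X × X).2

/-- Farber's topological complexity. -/
noncomputable def topComplexity (X : Type*) [TopologicalSpace X] : ℕ∞ :=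
  sInf ((↑) '' {n : ℕ | hasTCCover X n})

/-- A subset is contractible in the ambient space when its inclusion is null-homotopic. -/
def ContractibleIn {X : Type*} [TopologicalSpace X] (A : Set X) : Prop :=
  ∃ x₀ : X, ContinuousMap.Homotopic ⟨Subtype.val, continuous_subtype_val⟩
    (ContinuousMap.const A x₀)

/-- The (unreduced) Lusternik–Schnirelmann category. -/
noncomputable def cat (X : Type*) [TopologicalSpace X] : ℕ∞ :=
  sInf ((↑) '' {n : ℕ | ∃ U : Fin n → Set X, (∀ i, IsOpen (U i)) ∧ (⋃ i, U i) = Set.univ ∧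
    ∀ i, ContractibleIn (U i)})


/-!
A finite space is Alexandrov-discrete, so a path in it can only pass between points related by
specialization: path-joined points are linked by a zigzag `x₀ ⤳ x₁ ⤳ x₂ ⤳ ⋯` (each step in
either direction), and such a zigzag is exactly a continuous map out of a fence `J m`. For an
open `U ⊆ P × P`, apply this in the finite space `C(U, P)` to the two projections: a homotopy
between them, which a motion planner over `U` or a contraction of `U` in `P × P` provides, becomes
a section of `q_m` over `U`. This gives `CC ≤ TC` and `CC ≤ cat (P × P)`; conversely, a path from
`0` to `m` in `J m` turns sections of `q_m` into motion planners. Finally the open sets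
`Iic a ×ˢ Iic b`, with `a` and `b` maximal, cover `P × P` and contract onto `(a, b)`.
-/

open Relation ContinuousMap unitInterval

section Specialization

variable {X Y : Type*} [TopologicalSpace X] [TopologicalSpace Y]

theorem ContinuousMap.homotopic_of_forall_specializes {f g : C(Y, X)} (h : ∀ y, f y ⤳ g y) :
    f.Homotopic g := by
  classical
  refine ⟨⟨⟨({1} ×ˢ univ : Set (I × Y)).piecewise (fun p => g p.2) (fun p => f p.2), ?_⟩,
    fun y => by simp, fun y => by simp⟩⟩
  exact (isClosed_singleton.prod isClosed_univ).continuous_piecewise_of_specializes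
    (g.continuous.comp continuous_snd) (f.continuous.comp continuous_snd) fun p => h p.2

theorem contractibleIn_of_forall_specializes {U : Set X} {z : X} (h : ∀ x ∈ U, x ⤳ z) :
    ContractibleIn U :=
  ⟨z, homotopic_of_forall_specializes fun x => h x x.2⟩

theorem Joined.eqvGen_specializes [AlexandrovDiscrete X] {x y : X} (h : Joined x y) :
    EqvGen (· ⤳ ·) x y := by
  let S := {z | EqvGen (· ⤳ ·) x z}
  have hS : IsClopen S := by
    refine ⟨isOpen_compl_iff.1 <| isOpen_iff_forall_specializes.2 fun a b hab hb ha => ?_,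
      isOpen_iff_forall_specializes.2 fun a b hab hb => ?_⟩
    · exact hb (.trans _ _ _ ha (.rel _ _ hab))
    · exact .trans _ _ _ hb (.symm _ _ (.rel _ _ hab))
  obtain ⟨γ⟩ := h
  have hγ := (hS.preimage γ.continuous).eq_univ ⟨0, by simpa [S] using EqvGen.refl x⟩
  have h1 : (1 : I) ∈ γ ⁻¹' S := hγ ▸ mem_univ _
  simpa [S] using h1

end Specialization

theorem Relation.ReflTransGen.exists_chain_seq {α : Type*} {r : α → α → Prop} (hr : ∀ x, r x x)
    {a b : α} (h : ReflTransGen r a b) :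
    ∃ (c : ℕ → α) (k : ℕ), c 0 = a ∧ (∀ i ≥ k, c i = b) ∧ ∀ i, r (c i) (c (i + 1)) := by
  induction h using Relation.ReflTransGen.head_induction_on with
  | refl => exact ⟨fun _ => b, 0, rfl, fun _ _ => rfl, fun _ => hr b⟩
  | @head a a' haa' _ ih =>
    obtain ⟨c, k, hc0, hck, hc⟩ := ih
    refine ⟨fun i => if i = 0 then a else c (i - 1), k + 1, rfl, fun i hi => ?_, fun i => ?_⟩
    · simpa [show i ≠ 0 by omega] using hck (i - 1) (by omega)
    · rcases i with _ | i
      · simpa [hc0] using haa'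
      · simpa using hc i

namespace J

instance (m : ℕ) : Topology.IsLowerSet (J m) := ⟨rfl⟩

theorem le_def {m : ℕ} {i j : J m} :
    i ≤ j ↔ i.val = j.val ∨ (j.val % 2 = 1 ∧ (j.val = i.val + 1 ∨ i.val = j.val + 1)) :=
  Iff.rfl

theorem continuous_comp_val {Z : Type*} [TopologicalSpace Z] {m : ℕ} (f : ℕ → Z)
    (hf : ∀ q, f (2 * q) ⤳ f (2 * q + 1) ∧ f (2 * q + 2) ⤳ f (2 * q + 1)) :
    Continuous fun j : J m => f j.val := by
  refine continuous_def.2 fun V hV => Topology.IsLowerSet.isOpen_iff_isLowerSet.2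
    fun j i hij hj => ?_
  change f j.val ∈ V at hj
  change f i.val ∈ V
  rcases le_def.1 hij with h | ⟨hodd, h⟩
  · rwa [h]
  · obtain ⟨q, hq⟩ : ∃ q, j.val = 2 * q + 1 := ⟨j.val / 2, by omega⟩
    rw [hq] at hj
    rcases h with h | h
    · rw [show i.val = 2 * q by omega]
      exact (hf q).1.mem_open hV hj
    · rw [show i.val = 2 * q + 2 by omega]
      exact (hf q).2.mem_open hV hj

theorem joined_zero_last (m : ℕ) : Joined (zero : J m) last := by
  let p : ℕ → J m := fun i => (⟨min i m, by omega⟩ : Fin (m + 1))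
  have hp : ∀ i, (p i).val = min i m := fun _ => rfl
  have joined_of_le {a b : J m} (h : a ≤ b) : Joined a b :=
    ((Topology.IsLowerSet.specializes_iff_le.2 h).joinedIn (mem_univ _) (mem_univ _)).joined
  have step : ∀ i, Joined (p i) (p (i + 1)) := by
    intro i
    by_cases hi : i % 2 = 0
    · exact joined_of_le (le_def.2 (by simp only [hp]; omega))
    · exact (joined_of_le (le_def.2 (by simp only [hp]; omega))).symm
  have h : ∀ i, Joined (p 0) (p i) := fun i =>
    Nat.rec (Joined.refl _) (fun i h => h.trans (step i)) i
  convert h m <;> exact @Fin.ext (m + 1) _ _ (by simp [p, zero, last])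

end J

theorem exists_fence_of_chain {Z : Type*} [TopologicalSpace Z] (c : ℕ → Z)
    (hc : ∀ i, SymmGen (· ⤳ ·) (c i) (c (i + 1))) (m : ℕ) :
    ∃ F : C(J (2 * m), Z), F J.zero = c 0 ∧ F J.last = c m := by
  classical
  -- odd vertices are the local maxima of the fence: `2 * i + 1` carries whichever of
  -- `c i`, `c (i + 1)` is a specialization of the other
  let f : ℕ → Z := fun n => if n % 2 = 0 then c (n / 2)
    else if c (n / 2) ⤳ c (n / 2 + 1) then c (n / 2 + 1) else c (n / 2)
  have hf : ∀ q, f (2 * q) ⤳ f (2 * q + 1) ∧ f (2 * q + 2) ⤳ f (2 * q + 1) := by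
    intro q
    have e0 : (2 * q) % 2 = 0 ∧ 2 * q / 2 = q := by omega
    have e1 : (2 * q + 1) % 2 = 1 ∧ (2 * q + 1) / 2 = q := by omega
    have e2 : (2 * q + 2) % 2 = 0 ∧ (2 * q + 2) / 2 = q + 1 := by omega
    simp only [f, e0, e1, e2, if_true, one_ne_zero, if_false]
    split_ifs with h
    · exact ⟨h, specializes_rfl⟩
    · exact ⟨specializes_rfl, (hc q).resolve_left h⟩
  refine ⟨⟨fun j => f j.val, J.continuous_comp_val f hf⟩, ?_, ?_⟩
  · simp [f, J.val, J.zero]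
  · show f (2 * m) = c m
    simp [f]

section Complexity

variable {X : Type*} [TopologicalSpace X]

theorem homotopic_fst_snd_of_pathSection {U : Set (X × X)} (s : C(U, C(I, X)))
    (hs : ∀ x : U, s x 0 = (x : X × X).1 ∧ s x 1 = (x : X × X).2) :
    (fst.restrict U).Homotopic (snd.restrict U) :=
  ⟨⟨s.uncurry.comp prodSwap, fun x => (hs x).1, fun x => (hs x).2⟩⟩

theorem homotopic_fst_snd_of_contractibleIn [PathConnectedSpace X] {U : Set (X × X)}
    (h : ContractibleIn U) : (fst.restrict U).Homotopic (snd.restrict U) := by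
  obtain ⟨z, hz⟩ := h
  obtain ⟨γ⟩ := PathConnectedSpace.joined z.1 z.2
  have hγ : (const U z.1).Homotopic (const U z.2) :=
    ⟨⟨γ.toContinuousMap.comp fst, fun _ => γ.source, fun _ => γ.target⟩⟩
  exact ((Homotopic.refl fst).comp hz).trans (hγ.trans ((Homotopic.refl snd).comp hz).symm)

theorem exists_fenceSection_of_homotopic [Finite X] {U : Set (X × X)}
    (h : (fst.restrict U).Homotopic (snd.restrict U)) :
    ∃ k, ∀ m ≥ k, ∃ s : C(U, C(J (2 * m), X)),
      ∀ x : U, s x J.zero = (x : X × X).1 ∧ s x J.last = (x : X × X).2 := by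
  obtain ⟨H⟩ := h
  have : Finite C(U, X) := Finite.of_injective _ DFunLike.coe_injective
  have hjoined : Joined (fst.restrict U) (snd.restrict U) :=
    ⟨⟨H.curry, by ext; simp, by ext; simp⟩⟩
  have hR := hjoined.eqvGen_specializes
  rw [← EqvGen.reflTransGen_symmGen] at hR
  obtain ⟨c, k, hc0, hck, hc⟩ := hR.exists_chain_seq fun _ => .inl specializes_rfl
  refine ⟨k, fun m hm => ?_⟩
  obtain ⟨F, hF0, hFm⟩ := exists_fence_of_chain c hc m
  refine ⟨(F.uncurry.comp prodSwap).curry, fun x => ⟨?_, ?_⟩⟩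
  · simp [hF0, hc0]
  · simp [hFm, hck m hm]

theorem CC_le_of_homotopic [Finite X] {n : ℕ} (U : Fin n → Set (X × X))
    (hUo : ∀ i, IsOpen (U i)) (hU : ⋃ i, U i = univ)
    (h : ∀ i, (fst.restrict (U i)).Homotopic (snd.restrict (U i))) : CC X ≤ n := by
  choose k hk using fun i => exists_fenceSection_of_homotopic (h i)
  let M := Finset.univ.sup k
  exact (iInf_le _ (2 * M)).trans <| sInf_le
    ⟨n, ⟨U, hUo, hU, fun i => hk i M (Finset.le_sup (Finset.mem_univ i))⟩, rfl⟩

theorem CC_le_topComplexity [Finite X] : CC X ≤ topComplexity X :=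
  le_sInf <| forall_mem_image.2 fun _ ⟨U, hUo, hU, hs⟩ => CC_le_of_homotopic U hUo hU fun i =>
    let ⟨s, hs⟩ := hs i
    homotopic_fst_snd_of_pathSection s hs

theorem CC_le_cat_prod [Finite X] [PathConnectedSpace X] : CC X ≤ cat (X × X) :=
  le_sInf <| forall_mem_image.2 fun _ ⟨U, hUo, hU, hc⟩ => CC_le_of_homotopic U hUo hU fun i =>
    homotopic_fst_snd_of_contractibleIn (hc i)

theorem topComplexity_le_CC : topComplexity X ≤ CC X := by
  refine le_iInf fun m => le_sInf <| forall_mem_image.2 fun n ⟨U, hUo, hU, hs⟩ =>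
    sInf_le ⟨n, ⟨U, hUo, hU, fun i => ?_⟩, rfl⟩
  obtain ⟨s, hs⟩ := hs i
  obtain ⟨γ⟩ := J.joined_zero_last m
  refine ⟨(compRightContinuousMap X γ.toContinuousMap).comp s, fun x => ?_⟩
  simpa using hs x

theorem cat_le_topComplexity [Nonempty X] : cat X ≤ topComplexity X := by
  obtain ⟨x₀⟩ := ‹Nonempty X›
  refine le_sInf <| forall_mem_image.2 fun n ⟨U, hUo, hU, hs⟩ =>
    sInf_le ⟨n, ⟨fun i => (fun x => (x₀, x)) ⁻¹' U i, fun i => ?_, ?_, fun i => ?_⟩, rfl⟩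
  · exact (hUo i).preimage (by fun_prop)
  · simp [← preimage_iUnion, hU]
  · obtain ⟨s, hs⟩ := hs i
    let ι : C((fun x => (x₀, x)) ⁻¹' U i, U i) :=
      ((const X x₀).prodMk (.id X)).restrictPreimage (U i)
    exact ⟨x₀, ((homotopic_fst_snd_of_pathSection s hs).comp (Homotopic.refl ι)).symm⟩

end Complexity

section Order

variable {X Y : Type*} [Preorder X] [Preorder Y]

theorem cat_le_card_isMax [Finite X] [TopologicalSpace X] [Topology.IsLowerSet X] :
    cat X ≤ Nat.card {x : X // IsMax x} := by
  let e := (Finite.equivFin {x : X // IsMax x}).symm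
  refine sInf_le ⟨_, ⟨fun i => Iic (e i : X), fun i => ?_, ?_, fun i => ?_⟩, rfl⟩
  · exact Topology.IsLowerSet.isOpen_iff_isLowerSet.2 (isLowerSet_Iic _)
  · refine eq_univ_of_forall fun x => mem_iUnion.2 ?_
    obtain ⟨a, hxa, ha⟩ := Finite.exists_le_maximal (p := fun _ : X => True) trivial
    exact ⟨e.symm ⟨a, maximal_true.1 ha⟩, by simpa using hxa⟩
  · exact contractibleIn_of_forall_specializes fun x hx =>
      Topology.IsLowerSet.specializes_iff_le.2 hx

instance [TopologicalSpace X] [TopologicalSpace Y] [Topology.IsLowerSet X]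
    [Topology.IsLowerSet Y] : Topology.IsLowerSet (X × Y) :=
  Topology.isLowerSet_iff_nhds.2 fun (a, b) => by
    rw [nhds_prod_eq, Topology.IsLowerSet.nhds_eq_principal_Iic,
      Topology.IsLowerSet.nhds_eq_principal_Iic, Filter.prod_principal_principal, Iic_prod_Iic]

theorem card_isMax_prod :
    Nat.card {x : X × Y // IsMax x} =
      Nat.card {x : X // IsMax x} * Nat.card {y : Y // IsMax y} := by
  rw [← Nat.card_prod]
  exact Nat.card_congr <|
    (Equiv.subtypeEquivRight fun _ => Prod.isMax_iff).trans Equiv.subtypeProdEquivProd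

end Order

/-- For a path connected finite space `P`,
`cat(P) ≤ TC(P) = CC(P) ≤ cat(P × P) ≤ (#Max(P))²`. -/
theorem cat_le_TC_eq_CC_le_cat_sq
    (P : Type) [PartialOrder P] [Finite P] [TopologicalSpace P] [PathConnectedSpace P]
    (hP : ∀ s : Set P, IsOpen s ↔ IsLowerSet s) :
    cat P ≤ topComplexity P ∧ topComplexity P = CC P ∧
      CC P ≤ cat (P × P) ∧ cat (P × P) ≤ (Nat.card {x : P // IsMax x} : ℕ∞) ^ 2 := by
  have : Topology.IsLowerSet P := ⟨TopologicalSpace.ext_iff.2 hP⟩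
  have : Nonempty P := PathConnectedSpace.nonempty
  refine ⟨cat_le_topComplexity, le_antisymm topComplexity_le_CC CC_le_topComplexity,
    CC_le_cat_prod, ?_⟩
  calc cat (P × P) ≤ Nat.card {x : P × P // IsMax x} := cat_le_card_isMax
    _ = (Nat.card {x : P // IsMax x} : ℕ∞) ^ 2 := by rw [card_isMax_prod]; push_cast; ring
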